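/- Let D ∈ ℕ₊ and let Σ_1, Σ_2 be real symmetric positive definite D×D matrices. Then for all ω, ξ ∈ ℝ^D the generalized Fourier transform of the locally stationary Gaussian kernel k_LSG(x, x') = exp(−2π² ((x+x')/2)ᵀ Σ_1 ((x+x')/2)) · exp(−2π² (x−x')ᵀ Σ_2 (x−x')) satisfies ∫_{ℝ^D} ∫_{ℝ^D} k_LSG(x, x') exp(−2πi (ω·x − ξ·x')) dx dx' = N((ω+ξ)/2 | 0, Σ_2) · N(ω−ξ | 0, Σ_1). -/

import Mathlib

open MeasureTheory Matrix
open scoped BigOperators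

noncomputable section

/-- Euclidean dot product on `ℝ^D`. -/
def dotR {D : ℕ} (x y : Fin D → ℝ) : ℝ := ∑ d, x d * y d

/-- The multivariate Gaussian density `N(v | 0, Σ)` with mean `0` and covariance `S`. -/
def gaussD {D : ℕ} (S : Matrix (Fin D) (Fin D) ℝ) (v : Fin D → ℝ) : ℝ :=
  (2 * Real.pi) ^ (-(D : ℝ) / 2) * S.det ^ (-(1 : ℝ) / 2) *
    Real.exp (-(v ⬝ᵥ (S⁻¹ *ᵥ v)) / 2)

/-- The locally stationary Gaussian kernel
`k_LSG(x, x') = exp(-2π² ((x+x')/2)ᵀ Σ₁ ((x+x')/2)) · exp(-2π² (x-x')ᵀ Σ₂ (x-x'))`. -/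
def kLSG {D : ℕ} (S1 S2 : Matrix (Fin D) (Fin D) ℝ) (x x' : Fin D → ℝ) : ℝ :=
  Real.exp (-(2 * Real.pi ^ 2) * (((x + x') / 2) ⬝ᵥ (S1 *ᵥ ((x + x') / 2)))) *
    Real.exp (-(2 * Real.pi ^ 2) * ((x - x') ⬝ᵥ (S2 *ᵥ (x - x'))))

namespace KLSGProof

variable {D : ℕ}

def gfun (S : Matrix (Fin D) (Fin D) ℝ) (t : Fin D → ℝ) (x : Fin D → ℝ) : ℂ :=
  Complex.exp (((-(2 * Real.pi ^ 2) * (x ⬝ᵥ S *ᵥ x) : ℝ) : ℂ) +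
    (-(2 * (Real.pi : ℂ) * Complex.I)) * ((dotR t x : ℝ) : ℂ))

lemma integral_comp_mulVec {A : Matrix (Fin D) (Fin D) ℝ} (hA : A.det ≠ 0)
    (f : (Fin D → ℝ) → ℂ) :
    ∫ x : Fin D → ℝ, f (A *ᵥ x) = |A.det|⁻¹ • ∫ x : Fin D → ℝ, f x := by
  have hinv : Invertible A := A.invertibleOfIsUnitDet (isUnit_iff_ne_zero.2 hA)
  let e : (Fin D → ℝ) ≃ₗ[ℝ] (Fin D → ℝ) := A.toLinearEquiv' hinv
  let em : (Fin D → ℝ) ≃ᵐ (Fin D → ℝ) :=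
    e.toContinuousLinearEquiv.toHomeomorph.toMeasurableEquiv
  have hcoe : (em : (Fin D → ℝ) → (Fin D → ℝ)) = ⇑(Matrix.toLin' A) := rfl
  have hmap : Measure.map (⇑em) volume = ENNReal.ofReal |A.det⁻¹| • volume := by
    rw [hcoe]; exact Real.map_matrix_volume_pi_eq_smul_volume_pi hA
  have h1 : ∫ x, f (A *ᵥ x) = ∫ x, f (em x) := rfl
  rw [h1, ← MeasureTheory.integral_map_equiv em f, hmap, integral_smul_measure,
    ENNReal.toReal_ofReal (abs_nonneg _), abs_inv]

lemma integrable_comp_mulVec_iff {A : Matrix (Fin D) (Fin D) ℝ} (hA : A.det ≠ 0)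
    (f : (Fin D → ℝ) → ℂ) :
    Integrable (fun x : Fin D → ℝ => f (A *ᵥ x)) ↔ Integrable f := by
  have hinv : Invertible A := A.invertibleOfIsUnitDet (isUnit_iff_ne_zero.2 hA)
  let e : (Fin D → ℝ) ≃ₗ[ℝ] (Fin D → ℝ) := A.toLinearEquiv' hinv
  let em : (Fin D → ℝ) ≃ᵐ (Fin D → ℝ) :=
    e.toContinuousLinearEquiv.toHomeomorph.toMeasurableEquiv
  have hcoe : (em : (Fin D → ℝ) → (Fin D → ℝ)) = ⇑(Matrix.toLin' A) := rfl
  have hmap : Measure.map (⇑em) volume = ENNReal.ofReal |A.det⁻¹| • volume := by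
    rw [hcoe]; exact Real.map_matrix_volume_pi_eq_smul_volume_pi hA
  have h1 : Integrable (fun x : Fin D → ℝ => f (A *ᵥ x)) ↔ (Integrable (f ∘ ⇑em)) := Iff.rfl
  rw [h1, ← MeasureTheory.integrable_map_equiv em f, hmap,
    integrable_smul_measure (by simp [hA]) (by simp)]

lemma gfun_core {S : Matrix (Fin D) (Fin D) ℝ} (hS : S.PosDef) (t : Fin D → ℝ) :
    (∫ x : Fin D → ℝ, gfun S t x) = (gaussD S t : ℂ) ∧ Integrable (gfun S t) := by
  have hπ : (0:ℝ) < Real.pi := Real.pi_pos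
  open scoped MatrixOrder in set B := CFC.sqrt S with hBdef
  open scoped MatrixOrder in have hBsd : B.PosSemidef := (CFC.sqrt_nonneg S).posSemidef
  open scoped MatrixOrder in have hBB : B * B = S := CFC.sqrt_mul_sqrt_self S hS.posSemidef.nonneg
  have hdetS : 0 < S.det := hS.det_pos
  have hdetB : B.det ≠ 0 := by
    intro h
    rw [← hBB, det_mul, h, mul_zero] at hdetS
    exact lt_irrefl _ hdetS
  have hBt : Bᵀ = B := by
    have h := hBsd.isHermitian
    rwa [Matrix.IsHermitian, conjTranspose_eq_transpose_of_trivial] at h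
  set A := B⁻¹ with hAdef
  have hdetA : A.det ≠ 0 := by
    rw [hAdef, det_nonsing_inv, Ring.inverse_eq_inv]
    exact inv_ne_zero hdetB
  have hAt : Aᵀ = A := by rw [hAdef, transpose_nonsing_inv, hBt]
  have hBunit : IsUnit B.det := isUnit_iff_ne_zero.2 hdetB
  have hASA : A * S * A = 1 := by
    rw [hAdef, ← hBB, ← Matrix.mul_assoc]
    rw [nonsing_inv_mul B hBunit, Matrix.one_mul, mul_nonsing_inv B hBunit]
  have hAA : A * A = S⁻¹ := by rw [hAdef, ← Matrix.mul_inv_rev, hBB]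
  set c := A *ᵥ t with hcdef
  have h0 : ∀ y : Fin D → ℝ, A *ᵥ y = y ᵥ* A := by
    intro y; rw [← hAt, mulVec_transpose, hAt]
  have hquad : ∀ x : Fin D → ℝ, (A *ᵥ x) ⬝ᵥ S *ᵥ (A *ᵥ x) = x ⬝ᵥ x := by
    intro x
    rw [mulVec_mulVec, dotProduct_mulVec, h0, vecMul_vecMul, ← Matrix.mul_assoc, hASA,
      vecMul_one]
  have hdot : ∀ x : Fin D → ℝ, dotR t (A *ᵥ x) = c ⬝ᵥ x := by
    intro x
    show t ⬝ᵥ (A *ᵥ x) = c ⬝ᵥ x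
    rw [dotProduct_mulVec]
    congr 1
    rw [hcdef, h0]
  have hcc : c ⬝ᵥ c = t ⬝ᵥ S⁻¹ *ᵥ t := by
    have : (A *ᵥ t) ⬝ᵥ (A *ᵥ t) = (t ᵥ* A) ⬝ᵥ (A *ᵥ t) := by rw [h0]
    rw [hcdef, this, ← dotProduct_mulVec, mulVec_mulVec, hAA]
  have hcomp : ∀ x : Fin D → ℝ, gfun S t (A *ᵥ x) =
      Complex.exp (-((2 * Real.pi ^ 2 : ℝ) : ℂ) * ∑ i, (x i : ℂ) ^ 2 +
        ∑ i, (-(2 * (Real.pi : ℂ) * Complex.I) * (c i : ℂ)) * (x i : ℂ)) := by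
    intro x
    unfold gfun
    rw [hquad x, hdot x]
    congr 1
    have e1 : ((x ⬝ᵥ x : ℝ) : ℂ) = ∑ i, (x i : ℂ) ^ 2 := by
      push_cast [dotProduct, sq]
      ring
    have e2 : ((c ⬝ᵥ x : ℝ) : ℂ) = ∑ i, (c i : ℂ) * (x i : ℂ) := by
      push_cast [dotProduct]
      ring
    push_cast
    rw [e1, e2, Finset.mul_sum, Finset.mul_sum]
    congr 1
    exact Finset.sum_congr rfl fun i _ => by ring
  have hb : (0:ℝ) < (((2 * Real.pi ^ 2 : ℝ) : ℂ)).re := by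
    rw [Complex.ofReal_re]; positivity
  have hIcomp : Integrable (fun x : Fin D → ℝ => gfun S t (A *ᵥ x)) := by
    simp only [hcomp]
    have h := GaussianFourier.integrable_cexp_neg_sum_mul_add
      (b := fun _ : Fin D => ((2 * Real.pi ^ 2 : ℝ) : ℂ)) (fun i => hb)
      (fun i => -(2 * (Real.pi : ℂ) * Complex.I) * (c i : ℂ))
    simpa [Finset.mul_sum] using h
  have hInt : Integrable (gfun S t) := (integrable_comp_mulVec_iff hdetA _).mp hIcomp
  refine ⟨?_, hInt⟩
  have hmain : ∫ x : Fin D → ℝ, gfun S t x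
      = |A.det| • ∫ x : Fin D → ℝ, gfun S t (A *ᵥ x) := by
    rw [integral_comp_mulVec hdetA, smul_smul, mul_inv_cancel₀ (abs_ne_zero.mpr hdetA),
      one_smul]
  rw [hmain]
  simp only [hcomp]
  rw [GaussianFourier.integral_cexp_neg_mul_sum_add hb
    (fun i => -(2 * (Real.pi : ℂ) * Complex.I) * (c i : ℂ))]
  -- numeric evaluation
  have hdetB2 : B.det ^ 2 = S.det := by rw [sq, ← det_mul, hBB]
  have habs : |A.det| = (Real.sqrt S.det)⁻¹ := by
    rw [hAdef, det_nonsing_inv, Ring.inverse_eq_inv, abs_inv, ← hdetB2, Real.sqrt_sq_eq_abs]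
  have hsum : (∑ i, (-(2 * (Real.pi : ℂ) * Complex.I) * (c i : ℂ)) ^ 2)
      = ((-(4 * Real.pi ^ 2) * (c ⬝ᵥ c) : ℝ) : ℂ) := by
    push_cast [dotProduct, Finset.mul_sum]
    exact Finset.sum_congr rfl fun i _ => by rw [mul_pow, neg_sq, mul_pow, Complex.I_sq]; ring
  have harg : ((-(4 * Real.pi ^ 2) * (c ⬝ᵥ c) : ℝ) : ℂ) / (4 * ((2 * Real.pi ^ 2 : ℝ) : ℂ))
      = ((-(t ⬝ᵥ S⁻¹ *ᵥ t) / 2 : ℝ) : ℂ) := by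
    rw [hcc] at *
    push_cast
    have : ((Real.pi : ℂ)) ≠ 0 := by exact_mod_cast hπ.ne'
    field_simp
  have hpow : ((Real.pi : ℂ) / ((2 * Real.pi ^ 2 : ℝ) : ℂ)) ^ ((Fintype.card (Fin D) : ℂ) / 2)
      = (((2 * Real.pi) ^ (-(D : ℝ) / 2) : ℝ) : ℂ) := by
    have h1 : ((Real.pi : ℂ) / ((2 * Real.pi ^ 2 : ℝ) : ℂ)) = (((2 * Real.pi)⁻¹ : ℝ) : ℂ) := by
      have : ((Real.pi : ℂ)) ≠ 0 := by exact_mod_cast hπ.ne'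
      push_cast
      field_simp
    have h2 : (2 * Real.pi) ^ (-(D : ℝ) / 2) = ((2 * Real.pi)⁻¹) ^ ((D : ℝ) / 2) := by
      rw [Real.inv_rpow (by positivity), ← Real.rpow_neg (by positivity), neg_div]
    rw [h1, h2, Complex.ofReal_cpow (by positivity)]
    push_cast
    simp
  rw [hsum, harg, hpow, habs]
  rw [Complex.real_smul, ← Complex.ofReal_exp, ← Complex.ofReal_mul, ← Complex.ofReal_mul]
  have hsqrt : (Real.sqrt S.det)⁻¹ = S.det ^ (-(1 : ℝ) / 2) := by
    rw [Real.sqrt_eq_rpow, ← Real.rpow_neg hdetS.le]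
    norm_num
  exact congrArg Complex.ofReal (by unfold gaussD; rw [hsqrt]; ring)

variable {D : ℕ}

lemma gfun_continuous (S : Matrix (Fin D) (Fin D) ℝ) (t : Fin D → ℝ) :
    Continuous (gfun S t) := by
  have hq : Continuous fun x : Fin D → ℝ => x ⬝ᵥ S *ᵥ x := by
    show Continuous fun x : Fin D → ℝ => ∑ i, x i * ∑ j, S i j * x j
    exact continuous_finset_sum _ fun i _ => (continuous_apply i).mul
      (continuous_finset_sum _ fun j _ => continuous_const.mul (continuous_apply j))
  have hd : Continuous fun x : Fin D → ℝ => dotR t x := by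
    show Continuous fun x : Fin D → ℝ => ∑ i, t i * x i
    exact continuous_finset_sum _ fun i _ => continuous_const.mul (continuous_apply i)
  exact Complex.continuous_exp.comp
    ((Complex.continuous_ofReal.comp (continuous_const.mul hq)).add
      (continuous_const.mul (Complex.continuous_ofReal.comp hd)))

lemma key_integrable {S1 S2 : Matrix (Fin D) (Fin D) ℝ}
    (hS1 : S1.PosDef) (hS2 : S2.PosDef) (ω ξ : Fin D → ℝ) :
    Integrable (fun p : (Fin D → ℝ) × (Fin D → ℝ) =>
      gfun S1 (ω - ξ) (p.1 - p.2 / 2) * gfun S2 ((ω + ξ) / 2) p.2)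
      (volume.prod volume) := by
  set g := gfun S1 (ω - ξ) with hgdef
  set h := gfun S2 ((ω + ξ) / 2) with hhdef
  have hg : Integrable g := (gfun_core hS1 _).2
  have hh : Integrable h := (gfun_core hS2 _).2
  have hgc : Continuous g := gfun_continuous _ _
  have hhc : Continuous h := gfun_continuous _ _
  have hm : AEStronglyMeasurable
      (fun p : (Fin D → ℝ) × (Fin D → ℝ) => g (p.1 - p.2 / 2) * h p.2)
      (volume.prod volume) :=
    ((hgc.comp (continuous_fst.sub (continuous_snd.div_const 2))).mul
      (hhc.comp continuous_snd)).aestronglyMeasurable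
  rw [MeasureTheory.integrable_prod_iff' hm]
  constructor
  · exact Filter.Eventually.of_forall fun v =>
      (hg.comp_sub_right (v / 2)).mul_const (h v)
  · have heq : (fun v : Fin D → ℝ => ∫ x : Fin D → ℝ, ‖g (x - v / 2) * h v‖)
        = fun v : Fin D → ℝ => (∫ x : Fin D → ℝ, ‖g x‖) * ‖h v‖ := by
      funext v
      simp_rw [norm_mul]
      rw [MeasureTheory.integral_mul_const,
        MeasureTheory.integral_sub_right_eq_self (fun x => ‖g x‖) (v / 2)]
    rw [heq]
    exact hh.norm.const_mul _


end KLSGProof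

/-- The generalized Fourier transform (generalized spectral density) of the locally
stationary Gaussian kernel:
`∫∫ k_LSG(x,x') exp(-2πi(⟨ω,x⟩ - ⟨ξ,x'⟩)) dx dx' = N((ω+ξ)/2 | 0, Σ₂) · N(ω-ξ | 0, Σ₁)`. -/
theorem kLSG_generalized_spectral_density (D : ℕ) (hD : 0 < D)
    (S1 S2 : Matrix (Fin D) (Fin D) ℝ)
    (hS1 : S1.PosDef) (hS2 : S2.PosDef)
    (ω ξ : Fin D → ℝ) :
    (∫ x : Fin D → ℝ, ∫ x' : Fin D → ℝ,
        ((kLSG S1 S2 x x' : ℝ) : ℂ) *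
          Complex.exp (-(2 * (Real.pi : ℂ) * Complex.I * ((dotR ω x - dotR ξ x' : ℝ) : ℂ))))
      = ((gaussD S2 ((ω + ξ) / 2) * gaussD S1 (ω - ξ) : ℝ) : ℂ) := by
  classical
  set F : (Fin D → ℝ) → (Fin D → ℝ) → ℂ := fun x x' =>
    ((kLSG S1 S2 x x' : ℝ) : ℂ) *
      Complex.exp (-(2 * (Real.pi : ℂ) * Complex.I * ((dotR ω x - dotR ξ x' : ℝ) : ℂ)))
    with hFdef
  set g := KLSGProof.gfun S1 (ω - ξ) with hgdef
  set h := KLSGProof.gfun S2 ((ω + ξ) / 2) with hhdef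
  have hgcore := KLSGProof.gfun_core hS1 (ω - ξ)
  have hhcore := KLSGProof.gfun_core hS2 ((ω + ξ) / 2)
  have key : ∀ x v : Fin D → ℝ, F x (x - v) = g (x - v / 2) * h v := by
    intro x v
    rw [hFdef, hgdef, hhdef]
    simp only [kLSG, KLSGProof.gfun]
    have e1 : (x + (x - v)) / 2 = x - v / 2 := by
      funext d
      simp only [Pi.div_apply, Pi.add_apply, Pi.sub_apply, Pi.ofNat_apply]
      ring
    have e2 : x - (x - v) = v := sub_sub_cancel x v
    have e3 : dotR ω x - dotR ξ (x - v)
        = dotR (ω - ξ) (x - v / 2) + dotR ((ω + ξ) / 2) v := by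
      unfold dotR
      rw [← Finset.sum_sub_distrib, ← Finset.sum_add_distrib]
      refine Finset.sum_congr rfl fun d _ => ?_
      simp only [Pi.sub_apply, Pi.add_apply, Pi.div_apply, Pi.ofNat_apply]
      ring
    rw [e1, e2, e3]
    rw [Complex.ofReal_mul, Complex.ofReal_exp, Complex.ofReal_exp,
      ← Complex.exp_add, ← Complex.exp_add, ← Complex.exp_add]
    congr 1
    push_cast
    ring
  calc (∫ x : Fin D → ℝ, ∫ x' : Fin D → ℝ, F x x')
      = ∫ x : Fin D → ℝ, ∫ v : Fin D → ℝ, F x (x - v) := by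
        congr 1
        funext x
        exact (MeasureTheory.integral_sub_left_eq_self (fun x' => F x x') volume x).symm
    _ = ∫ x : Fin D → ℝ, ∫ v : Fin D → ℝ, g (x - v / 2) * h v := by
        simp only [key]
    _ = ∫ v : Fin D → ℝ, ∫ x : Fin D → ℝ, g (x - v / 2) * h v :=
        MeasureTheory.integral_integral_swap (KLSGProof.key_integrable hS1 hS2 ω ξ)
    _ = ∫ v : Fin D → ℝ, (∫ x : Fin D → ℝ, g x) * h v := by
        congr 1
        funext v
        rw [MeasureTheory.integral_mul_const,
          MeasureTheory.integral_sub_right_eq_self g (v / 2)]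
    _ = (∫ x : Fin D → ℝ, g x) * ∫ v : Fin D → ℝ, h v :=
        MeasureTheory.integral_const_mul _ _
    _ = ((gaussD S1 (ω - ξ) : ℝ) : ℂ) * ((gaussD S2 ((ω + ξ) / 2) : ℝ) : ℂ) := by
        rw [hgcore.1, hhcore.1]
    _ = ((gaussD S2 ((ω + ξ) / 2) * gaussD S1 (ω - ξ) : ℝ) : ℂ) := by
        push_cast
        ring
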